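/- Consider in ℝ² a closed vertical strip V of width 2ε and an infinite strip S of width 2δ around a line making angle α ≠ 0 with the vertical direction, where 0 < ε < δ. Then the intersection V ∩ S contains a closed axis-parallel rectangle of width 2ε and height 2δ/sin|α| − 2ε/tan|α|, provided this quantity is positive. -/

import Mathlib

open Real

/-! Write `(s, c) = (sin α, cos α)`. The foot of the perpendicular from `p` to the line is
`(p₀ s + p₁ c) • (s, c)`, at distance `|p₀ c - p₁ s|`, so `S` contains the slab
`|x c - y s| ≤ δ`. Over the centre `x₀` of `V` the line is at height `x₀ c / s`; centre the box
there. A horizontal move by at most `ε` changes `x c` by at most `ε c`, and a vertical move by `η`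
changes `y s` by `|s| η`, so half-height `(δ - ε c) / |s|` keeps the box in the slab. Since
`sin |α| = |s|` and `tan |α| = |s| / c`, twice this is the height in the statement. -/

lemma infDist_line_le_abs {s c : ℝ} (hsc : s ^ 2 + c ^ 2 = 1) (p : EuclideanSpace ℝ (Fin 2)) :
    Metric.infDist p {q : EuclideanSpace ℝ (Fin 2) | ∃ t : ℝ, q = t • WithLp.toLp 2 ![s, c]}
      ≤ |p 0 * c - p 1 * s| := by
  set t := p 0 * s + p 1 * c
  have hfoot : t • (WithLp.toLp 2 ![s, c] : EuclideanSpace ℝ (Fin 2)) ∈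
      {q : EuclideanSpace ℝ (Fin 2) | ∃ t : ℝ, q = t • WithLp.toLp 2 ![s, c]} := ⟨t, rfl⟩
  have hdist : dist p (t • (WithLp.toLp 2 ![s, c] : EuclideanSpace ℝ (Fin 2)))
      = √((p 0 * c - p 1 * s) ^ 2) := by
    rw [EuclideanSpace.dist_eq, Fin.sum_univ_two]
    congr 1
    simp only [PiLp.smul_apply, Matrix.cons_val_zero, Matrix.cons_val_one,
      smul_eq_mul, Real.dist_eq, sq_abs]
    linear_combination (t ^ 2 - p 0 ^ 2 - p 1 ^ 2) * hsc
  calc Metric.infDist p _ ≤ dist p (t • (WithLp.toLp 2 ![s, c] : EuclideanSpace ℝ (Fin 2))) :=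
        Metric.infDist_le_dist_of_mem hfoot
    _ = |p 0 * c - p 1 * s| := by rw [hdist, sqrt_sq_eq_abs]

lemma abs_mul_sub_mul_le {x y x₀ ε δ s c : ℝ} (hs : s ≠ 0) (hc : 0 ≤ c) (hx : |x - x₀| ≤ ε)
    (hy : |y - x₀ * c / s| ≤ (δ - ε * c) / |s|) : |x * c - y * s| ≤ δ := by
  have hs' : 0 < |s| := abs_pos.2 hs
  calc |x * c - y * s| = |(x - x₀) * c - (y - x₀ * c / s) * s| := by
        congr 1; field_simp; ring
    _ ≤ |x - x₀| * c + |y - x₀ * c / s| * |s| :=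
        (abs_sub _ _).trans_eq (by rw [abs_mul, abs_mul, abs_of_nonneg hc])
    _ ≤ ε * c + (δ - ε * c) / |s| * |s| := by gcongr
    _ = δ := by field_simp; ring

theorem stmt_4_general (ε δ α x₀ : ℝ)
    (hα : 0 < |α|) (hα' : |α| < π / 2) :
    ∃ y₀ : ℝ,
      {p : EuclideanSpace ℝ (Fin 2) |
          p 0 ∈ Set.Icc (x₀ - ε) (x₀ + ε) ∧
          p 1 ∈ Set.Icc y₀ (y₀ + (2 * δ / Real.sin |α| - 2 * ε / Real.tan |α|))}
        ⊆ {p : EuclideanSpace ℝ (Fin 2) | |p 0 - x₀| ≤ ε} ∩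
          {p : EuclideanSpace ℝ (Fin 2) |
            Metric.infDist p
              {q : EuclideanSpace ℝ (Fin 2) |
                ∃ t : ℝ, q = t • (WithLp.toLp 2 ![Real.sin α, Real.cos α] : EuclideanSpace ℝ (Fin 2))} ≤ δ} := by
  have hsin_abs : |sin α| = sin |α| := abs_sin_eq_sin_abs_of_abs_le_pi (by linarith [pi_pos])
  have hsin : 0 < |sin α| := hsin_abs ▸ sin_pos_of_pos_of_lt_pi hα (by linarith [pi_pos])
  have hcos : 0 < cos α := cos_abs α ▸ cos_pos_of_mem_Ioo ⟨by linarith [pi_pos], hα'⟩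
  have hheight : 2 * δ / sin |α| - 2 * ε / tan |α| = 2 * ((δ - ε * cos α) / |sin α|) := by
    rw [tan_eq_sin_div_cos, cos_abs, ← hsin_abs]
    field_simp
  refine ⟨x₀ * cos α / sin α - (δ - ε * cos α) / |sin α|, ?_⟩
  rintro p ⟨⟨hx₁, hx₂⟩, hy₁, hy₂⟩
  rw [hheight] at hy₂
  have hx : |p 0 - x₀| ≤ ε := abs_le.2 ⟨by linarith, by linarith⟩
  have hy : |p 1 - x₀ * cos α / sin α| ≤ (δ - ε * cos α) / |sin α| :=
    abs_le.2 ⟨by linarith, by linarith⟩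
  exact ⟨hx, (infDist_line_le_abs (sin_sq_add_cos_sq α) p).trans
    (abs_mul_sub_mul_le (abs_pos.1 hsin) hcos.le hx hy)⟩

/-- The intersection of a closed vertical strip of width 2ε with a strip of
width 2δ around a line making angle α with the vertical contains a closed
axis-parallel rectangle of width 2ε and height 2δ/sin|α| − 2ε/tan|α|. -/
theorem stmt_4 (ε δ α x₀ : ℝ) (hε : 0 < ε) (hεδ : ε < δ)
    (hα : 0 < |α|) (hα' : |α| < π / 2)
    (hpos : 0 < 2 * δ / Real.sin |α| - 2 * ε / Real.tan |α|) :
    ∃ y₀ : ℝ,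
      {p : EuclideanSpace ℝ (Fin 2) |
          p 0 ∈ Set.Icc (x₀ - ε) (x₀ + ε) ∧
          p 1 ∈ Set.Icc y₀ (y₀ + (2 * δ / Real.sin |α| - 2 * ε / Real.tan |α|))}
        ⊆ {p : EuclideanSpace ℝ (Fin 2) | |p 0 - x₀| ≤ ε} ∩
          {p : EuclideanSpace ℝ (Fin 2) |
            Metric.infDist p
              {q : EuclideanSpace ℝ (Fin 2) |
                ∃ t : ℝ, q = t • (WithLp.toLp 2 ![Real.sin α, Real.cos α] : EuclideanSpace ℝ (Fin 2))} ≤ δ} :=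
  stmt_4_general ε δ α x₀ hα hα'
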